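/- Let H be a closed 3-form on M. The H-twisted Courant–Dorfman bracket on sections of TM ⊕ T*M, [v⊕η, v'⊕η'] = [v,v']_Lie ⊕ (L_v η' − ι_{v'} dη + ι_v ι_{v'} H), satisfies the Leibniz identity [e₁, [e₂, e₃]] = [[e₁, e₂], e₃] + [e₂, [e₁, e₃]] for all sections e₁, e₂, e₃ of TM ⊕ T*M. -/

import Mathlib

open scoped BigOperators

noncomputable section

/-- Partial derivative `∂_k f` on the chart `M = ℝⁿ`. -/
def pd {n : ℕ} (k : Fin n) (f : (Fin n → ℝ) → ℝ) : (Fin n → ℝ) → ℝ :=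
  fun x => fderiv ℝ f x (Pi.single k 1)

/-- Lie bracket of vector fields, `[v,v']^i = v^k ∂_k v'^i − v'^k ∂_k v^i`. -/
def lieVF {n : ℕ} (v w : (Fin n → ℝ) → Fin n → ℝ) : (Fin n → ℝ) → Fin n → ℝ :=
  fun x i => ∑ k, (v x k * pd k (fun y => w y i) x - w x k * pd k (fun y => v y i) x)

/-- Lie derivative of a 1-form along a vector field. -/
def lieDer1 {n : ℕ} (X β : (Fin n → ℝ) → Fin n → ℝ) : (Fin n → ℝ) → Fin n → ℝ :=
  fun x i => (∑ k, X x k * pd k (fun y => β y i) x) + ∑ k, β x k * pd i (fun y => X y k) x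

/-- `ι_{v'} dη` in components: `(ι_{v'} dη)_i = v'^k (∂_k η_i − ∂_i η_k)`. -/
def iotadEta {n : ℕ} (v' η : (Fin n → ℝ) → Fin n → ℝ) : (Fin n → ℝ) → Fin n → ℝ :=
  fun x i => ∑ k, v' x k * (pd k (fun y => η y i) x - pd i (fun y => η y k) x)

/-- `ι_v ι_{v'} H = H(v', v, ·)` in components. -/
def iota2H {n : ℕ} (H : Fin n → Fin n → Fin n → (Fin n → ℝ) → ℝ)
    (v v' : (Fin n → ℝ) → Fin n → ℝ) : (Fin n → ℝ) → Fin n → ℝ :=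
  fun x i => ∑ k, ∑ l, v' x k * v x l * H k l i x

/-- The `H`-twisted Courant–Dorfman bracket on sections `v ⊕ η` of `TM ⊕ T*M`:
`[v⊕η, v'⊕η'] = [v,v']_Lie ⊕ (L_v η' − ι_{v'} dη + ι_v ι_{v'} H)`. -/
def dorfman {n : ℕ} (H : Fin n → Fin n → Fin n → (Fin n → ℝ) → ℝ)
    (e e' : ((Fin n → ℝ) → Fin n → ℝ) × ((Fin n → ℝ) → Fin n → ℝ)) :
    ((Fin n → ℝ) → Fin n → ℝ) × ((Fin n → ℝ) → Fin n → ℝ) :=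
  (lieVF e.1 e'.1,
   fun x i => lieDer1 e.1 e'.2 x i - iotadEta e'.1 e.2 x i + iota2H H e.1 e'.1 x i)

/-- The symmetric pairing `⟨v⊕η, v'⊕η'⟩ = η(v') + η'(v)`. -/
def cPair {n : ℕ} (e e' : ((Fin n → ℝ) → Fin n → ℝ) × ((Fin n → ℝ) → Fin n → ℝ)) :
    (Fin n → ℝ) → ℝ :=
  fun x => (∑ i, e.2 x i * e'.1 x i) + ∑ i, e'.2 x i * e.1 x i

/-- Smoothness of a generalized section. -/
def SmoothSec {n : ℕ} (e : ((Fin n → ℝ) → Fin n → ℝ) × ((Fin n → ℝ) → Fin n → ℝ)) : Prop :=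
  (∀ i, ContDiff ℝ (⊤ : ℕ∞) (fun x => e.1 x i)) ∧ ∀ i, ContDiff ℝ (⊤ : ℕ∞) (fun x => e.2 x i)

/-- The 3-form `H` is (totally) antisymmetric. -/
def Antisym3 {n : ℕ} (H : Fin n → Fin n → Fin n → (Fin n → ℝ) → ℝ) : Prop :=
  (∀ i j k x, H i j k x = - H j i k x) ∧ (∀ i j k x, H i j k x = - H i k j x)

/-- `dH = 0` in components. -/
def Closed3 {n : ℕ} (H : Fin n → Fin n → Fin n → (Fin n → ℝ) → ℝ) : Prop :=
  ∀ i j k l x, pd i (H j k l) x - pd j (H i k l) x + pd k (H i j l) x - pd l (H i j k) x = 0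

namespace CD
variable {n : ℕ} {f g : (Fin n → ℝ) → ℝ} {x : Fin n → ℝ}
lemma dAt (hf : ContDiff ℝ (⊤ : ℕ∞) f) : DifferentiableAt ℝ f x :=
  (hf.differentiable (by simp)).differentiableAt
lemma pd_add (hf : DifferentiableAt ℝ f x) (hg : DifferentiableAt ℝ g x) (k : Fin n) :
    pd k (fun y => f y + g y) x = pd k f x + pd k g x := by
  simp [pd, fderiv_fun_add hf hg]
lemma pd_sub (hf : DifferentiableAt ℝ f x) (hg : DifferentiableAt ℝ g x) (k : Fin n) :
    pd k (fun y => f y - g y) x = pd k f x - pd k g x := by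
  simp [pd, fderiv_fun_sub hf hg]
lemma pd_mul (hf : DifferentiableAt ℝ f x) (hg : DifferentiableAt ℝ g x) (k : Fin n) :
    pd k (fun y => f y * g y) x = pd k f x * g x + f x * pd k g x := by
  simp [pd, fderiv_fun_mul hf hg]; ring
lemma pd_sum {m : ℕ} {F : Fin m → (Fin n → ℝ) → ℝ}
    (hf : ∀ j, DifferentiableAt ℝ (F j) x) (k : Fin n) :
    pd k (fun y => ∑ j, F j y) x = ∑ j, pd k (F j) x := by
  simp [pd, fderiv_fun_sum (fun j _ => hf j)]
lemma contDiff_pd (hf : ContDiff ℝ (⊤ : ℕ∞) f) (k : Fin n) : ContDiff ℝ (⊤ : ℕ∞) (pd k f) :=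
  (hf.fderiv_right (by simp)).clm_apply contDiff_const
lemma pd_comm (hf : ContDiff ℝ (⊤ : ℕ∞) f) (k l : Fin n) :
    pd k (pd l f) x = pd l (pd k f) x := by
  have hd : DifferentiableAt ℝ (fderiv ℝ f) x :=
    ((hf.fderiv_right (m := (⊤ : ℕ∞)) (by simp)).differentiable (by simp)).differentiableAt
  have h1 : ∀ (k : Fin n) (v : Fin n → ℝ), pd k (fun y => fderiv ℝ f y v) x
      = fderiv ℝ (fderiv ℝ f) x (Pi.single k 1) v := by
    intro k v
    simp [pd, fderiv_clm_apply hd (differentiableAt_const v)]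
  have hsym := ((hf.contDiffAt (x := x)).isSymmSndFDerivAt (by rw [minSmoothness_of_isRCLikeNormedField]; exact WithTop.coe_le_coe.mpr le_top)).eq
  calc pd k (pd l f) x = fderiv ℝ (fderiv ℝ f) x (Pi.single k 1) (Pi.single l 1) := h1 k _
    _ = fderiv ℝ (fderiv ℝ f) x (Pi.single l 1) (Pi.single k 1) := hsym _ _
    _ = pd l (pd k f) x := (h1 l _).symm

variable {v w X β η v' : (Fin n → ℝ) → Fin n → ℝ}
variable {H : Fin n → Fin n → Fin n → (Fin n → ℝ) → ℝ}

lemma pd_lieVF (hv : ∀ j, ContDiff ℝ (⊤ : ℕ∞) (fun x => v x j))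
    (hw : ∀ j, ContDiff ℝ (⊤ : ℕ∞) (fun x => w x j)) (k i : Fin n) :
    pd k (fun y => lieVF v w y i) x
      = ∑ l, (pd k (fun y => v y l) x * pd l (fun y => w y i) x
            + v x l * pd k (pd l (fun y => w y i)) x
            - (pd k (fun y => w y l) x * pd l (fun y => v y i) x
            + w x l * pd k (pd l (fun y => v y i)) x)) := by
  rw [show (fun y => lieVF v w y i)
      = (fun y => ∑ l, (v y l * pd l (fun z => w z i) y - w y l * pd l (fun z => v z i) y))
      from rfl]
  rw [pd_sum (fun l => ((dAt (hv l)).fun_mul (dAt (contDiff_pd (hw i) l))).fun_sub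
      ((dAt (hw l)).fun_mul (dAt (contDiff_pd (hv i) l)))) k]
  refine Finset.sum_congr rfl fun l _ => ?_
  rw [pd_sub ((dAt (hv l)).fun_mul (dAt (contDiff_pd (hw i) l)))
      ((dAt (hw l)).fun_mul (dAt (contDiff_pd (hv i) l))) k,
    pd_mul (dAt (hv l)) (dAt (contDiff_pd (hw i) l)) k,
    pd_mul (dAt (hw l)) (dAt (contDiff_pd (hv i) l)) k]

lemma pd_lieDer1 (hX : ∀ j, ContDiff ℝ (⊤ : ℕ∞) (fun x => X x j))
    (hβ : ∀ j, ContDiff ℝ (⊤ : ℕ∞) (fun x => β x j)) (k i : Fin n) :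
    pd k (fun y => lieDer1 X β y i) x
      = ∑ l, (pd k (fun y => X y l) x * pd l (fun y => β y i) x
            + X x l * pd k (pd l (fun y => β y i)) x
            + pd k (fun y => β y l) x * pd i (fun y => X y l) x
            + β x l * pd k (pd i (fun y => X y l)) x) := by
  rw [show (fun y => lieDer1 X β y i)
      = (fun y => (∑ l, X y l * pd l (fun z => β z i) y) + ∑ l, β y l * pd i (fun z => X z l) y)
      from rfl]
  rw [pd_add (DifferentiableAt.fun_sum fun l _ => (dAt (hX l)).fun_mul (dAt (contDiff_pd (hβ i) l)))
      (DifferentiableAt.fun_sum fun l _ => (dAt (hβ l)).fun_mul (dAt (contDiff_pd (hX l) i))) k,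
    pd_sum (fun l => (dAt (hX l)).fun_mul (dAt (contDiff_pd (hβ i) l))) k,
    pd_sum (fun l => (dAt (hβ l)).fun_mul (dAt (contDiff_pd (hX l) i))) k,
    ← Finset.sum_add_distrib]
  refine Finset.sum_congr rfl fun l _ => ?_
  rw [pd_mul (dAt (hX l)) (dAt (contDiff_pd (hβ i) l)) k,
    pd_mul (dAt (hβ l)) (dAt (contDiff_pd (hX l) i)) k]
  ring

lemma pd_iotadEta (hv' : ∀ j, ContDiff ℝ (⊤ : ℕ∞) (fun x => v' x j))
    (hη : ∀ j, ContDiff ℝ (⊤ : ℕ∞) (fun x => η x j)) (k i : Fin n) :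
    pd k (fun y => iotadEta v' η y i) x
      = ∑ l, (pd k (fun y => v' y l) x * (pd l (fun y => η y i) x - pd i (fun y => η y l) x)
            + v' x l * (pd k (pd l (fun y => η y i)) x - pd k (pd i (fun y => η y l)) x)) := by
  rw [show (fun y => iotadEta v' η y i)
      = (fun y => ∑ l, v' y l * (pd l (fun z => η z i) y - pd i (fun z => η z l) y))
      from rfl]
  rw [pd_sum (fun l => (dAt (hv' l)).fun_mul
      ((dAt (contDiff_pd (hη i) l)).fun_sub (dAt (contDiff_pd (hη l) i)))) k]
  refine Finset.sum_congr rfl fun l _ => ?_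
  rw [pd_mul (dAt (hv' l))
      ((dAt (contDiff_pd (hη i) l)).fun_sub (dAt (contDiff_pd (hη l) i))) k,
    pd_sub (dAt (contDiff_pd (hη i) l)) (dAt (contDiff_pd (hη l) i)) k]

lemma pd_iota2H (hH : ∀ a b c, ContDiff ℝ (⊤ : ℕ∞) (H a b c))
    (hv : ∀ j, ContDiff ℝ (⊤ : ℕ∞) (fun x => v x j)) (hv' : ∀ j, ContDiff ℝ (⊤ : ℕ∞) (fun x => v' x j))
    (k i : Fin n) :
    pd k (fun y => iota2H H v v' y i) x
      = ∑ p, ∑ q, (pd k (fun y => v' y p) x * v x q * H p q i x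
            + v' x p * pd k (fun y => v y q) x * H p q i x
            + v' x p * v x q * pd k (H p q i) x) := by
  rw [show (fun y => iota2H H v v' y i)
      = (fun y => ∑ p, ∑ q, v' y p * v y q * H p q i y) from rfl]
  rw [pd_sum (fun p => DifferentiableAt.fun_sum fun q _ =>
      ((dAt (hv' p)).fun_mul (dAt (hv q))).fun_mul (dAt (hH p q i))) k]
  refine Finset.sum_congr rfl fun p _ => ?_
  rw [pd_sum (fun q => ((dAt (hv' p)).fun_mul (dAt (hv q))).fun_mul (dAt (hH p q i))) k]
  refine Finset.sum_congr rfl fun q _ => ?_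
  rw [pd_mul ((dAt (hv' p)).fun_mul (dAt (hv q))) (dAt (hH p q i)) k,
    pd_mul (dAt (hv' p)) (dAt (hv q)) k]
  ring

lemma sum_sum_antisymm (D : Fin n → Fin n → ℝ) (h : ∀ k l, D k l = -D l k) :
    ∑ k, ∑ l, D k l = 0 := by
  have h2 : (∑ k, ∑ l, D k l) = - (∑ k, ∑ l, D k l) := by
    calc (∑ k, ∑ l, D k l) = ∑ l, ∑ k, D k l := Finset.sum_comm
      _ = ∑ l, ∑ k, -(D l k) := by
          exact Finset.sum_congr rfl fun l _ => Finset.sum_congr rfl fun k _ => h k l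
      _ = - (∑ l, ∑ k, D l k) := by simp
  linarith

lemma cancel2 (f g : Fin n → Fin n → ℝ) (h : ∀ k l, f l k - g k l = -(f k l - g l k)) :
    ∑ k, ∑ l, f k l = ∑ k, ∑ l, g k l := by
  have h2 : ∑ k, ∑ l, (f l k - g k l) = 0 := sum_sum_antisymm _ h
  have h3 : ∑ k, ∑ l, f l k = ∑ k, ∑ l, g k l := by
    rw [← sub_eq_zero]
    calc (∑ k, ∑ l, f l k) - ∑ k, ∑ l, g k l
        = ∑ k, ((∑ l, f l k) - ∑ l, g k l) := by rw [Finset.sum_sub_distrib]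
      _ = ∑ k, ∑ l, (f l k - g k l) := by
          exact Finset.sum_congr rfl fun k _ => (Finset.sum_sub_distrib _ _).symm
      _ = 0 := h2
  calc (∑ k, ∑ l, f k l) = ∑ l, ∑ k, f k l := Finset.sum_comm
    _ = ∑ k, ∑ l, g k l := h3

lemma cancel3 (f g : Fin n → Fin n → Fin n → ℝ)
    (h : ∀ k p q, (f k p q - g k p q) + (f k q p - g k q p) + (f p k q - g p k q)
        + (f p q k - g p q k) + (f q k p - g q k p) + (f q p k - g q p k) = 0) :
    ∑ k, ∑ p, ∑ q, f k p q = ∑ k, ∑ p, ∑ q, g k p q := by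
  set D : Fin n → Fin n → Fin n → ℝ := fun k p q => f k p q - g k p q with hD
  have hsplit : ∀ (u : Fin n → Fin n → Fin n → ℝ),
      ∑ k, ∑ p, ∑ q, u k q p = ∑ k, ∑ p, ∑ q, u k p q := by
    intro u; exact Finset.sum_congr rfl fun k _ => Finset.sum_comm
  have e2 : ∑ k, ∑ p, ∑ q, D k q p = ∑ k, ∑ p, ∑ q, D k p q := hsplit D
  have e3 : ∑ k, ∑ p, ∑ q, D p k q = ∑ k, ∑ p, ∑ q, D k p q := Finset.sum_comm
  have e4 : ∑ k, ∑ p, ∑ q, D p q k = ∑ k, ∑ p, ∑ q, D k p q := by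
    calc ∑ k, ∑ p, ∑ q, D p q k = ∑ p, ∑ k, ∑ q, D p q k := Finset.sum_comm
      _ = ∑ k, ∑ p, ∑ q, D k p q := Finset.sum_congr rfl fun a _ => Finset.sum_comm
  have e5 : ∑ k, ∑ p, ∑ q, D q k p = ∑ k, ∑ p, ∑ q, D k p q := by
    calc ∑ k, ∑ p, ∑ q, D q k p = ∑ k, ∑ p, ∑ q, D p k q :=
          Finset.sum_congr rfl fun k _ => Finset.sum_comm
      _ = ∑ k, ∑ p, ∑ q, D k p q := Finset.sum_comm
  have e6 : ∑ k, ∑ p, ∑ q, D q p k = ∑ k, ∑ p, ∑ q, D k p q := by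
    calc ∑ k, ∑ p, ∑ q, D q p k = ∑ k, ∑ p, ∑ q, D q k p := Finset.sum_comm
      _ = ∑ k, ∑ p, ∑ q, D k p q := e5
  have hz : ∑ k, ∑ p, ∑ q, (D k p q + D k q p + D p k q + D p q k + D q k p + D q p k)
      = (0 : ℝ) := by
    simp only [hD, h, Finset.sum_const_zero]
  have hsum : ∑ k, ∑ p, ∑ q, (D k p q + D k q p + D p k q + D p q k + D q k p + D q p k)
      = (∑ k, ∑ p, ∑ q, D k p q) + (∑ k, ∑ p, ∑ q, D k q p) + (∑ k, ∑ p, ∑ q, D p k q)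
        + (∑ k, ∑ p, ∑ q, D p q k) + (∑ k, ∑ p, ∑ q, D q k p) + (∑ k, ∑ p, ∑ q, D q p k) := by
    simp [Finset.sum_add_distrib]
  have hS : (6 : ℝ) * (∑ k, ∑ p, ∑ q, D k p q) = 0 := by
    rw [hsum, e2, e3, e4, e5, e6] at hz; linarith
  have hS0 : ∑ k, ∑ p, ∑ q, D k p q = 0 := by linarith
  have : (∑ k, ∑ p, ∑ q, f k p q) - ∑ k, ∑ p, ∑ q, g k p q = 0 := by
    calc (∑ k, ∑ p, ∑ q, f k p q) - ∑ k, ∑ p, ∑ q, g k p q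
        = ∑ k, ∑ p, ∑ q, D k p q := by
          rw [← Finset.sum_sub_distrib]
          refine Finset.sum_congr rfl fun k _ => ?_
          rw [← Finset.sum_sub_distrib]
          refine Finset.sum_congr rfl fun p _ => ?_
          rw [← Finset.sum_sub_distrib]
      _ = 0 := hS0
  linarith

lemma smooth_lieDer1 (hX : ∀ j, ContDiff ℝ (⊤ : ℕ∞) (fun x => X x j))
    (hβ : ∀ j, ContDiff ℝ (⊤ : ℕ∞) (fun x => β x j)) (i : Fin n) :
    ContDiff ℝ (⊤ : ℕ∞) (fun x => lieDer1 X β x i) :=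
  (ContDiff.sum fun k _ => (hX k).mul (contDiff_pd (hβ i) k)).add
    (ContDiff.sum fun k _ => (hβ k).mul (contDiff_pd (hX k) i))

lemma smooth_iotadEta (hv' : ∀ j, ContDiff ℝ (⊤ : ℕ∞) (fun x => v' x j))
    (hη : ∀ j, ContDiff ℝ (⊤ : ℕ∞) (fun x => η x j)) (i : Fin n) :
    ContDiff ℝ (⊤ : ℕ∞) (fun x => iotadEta v' η x i) :=
  ContDiff.sum fun k _ => (hv' k).mul ((contDiff_pd (hη i) k).sub (contDiff_pd (hη k) i))

lemma smooth_iota2H (hH : ∀ a b c, ContDiff ℝ (⊤ : ℕ∞) (H a b c))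
    (hv : ∀ j, ContDiff ℝ (⊤ : ℕ∞) (fun x => v x j)) (hv' : ∀ j, ContDiff ℝ (⊤ : ℕ∞) (fun x => v' x j))
    (i : Fin n) : ContDiff ℝ (⊤ : ℕ∞) (fun x => iota2H H v v' x i) :=
  ContDiff.sum fun k _ => ContDiff.sum fun l _ => ((hv' k).mul (hv l)).mul (hH k l i)


end CD

namespace CD
variable {n : ℕ} {x : Fin n → ℝ}
variable {v1 v2 v3 : (Fin n → ℝ) → Fin n → ℝ}

lemma lieVF_app (v w : (Fin n → ℝ) → Fin n → ℝ) (x : Fin n → ℝ) (k : Fin n) :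
    lieVF v w x k
      = ∑ l, (v x l * pd l (fun y => w y k) x - w x l * pd l (fun y => v y k) x) := rfl

lemma idJacobi (hv1 : ∀ j, ContDiff ℝ (⊤ : ℕ∞) (fun x => v1 x j))
    (hv2 : ∀ j, ContDiff ℝ (⊤ : ℕ∞) (fun x => v2 x j))
    (hv3 : ∀ j, ContDiff ℝ (⊤ : ℕ∞) (fun x => v3 x j)) (x : Fin n → ℝ) (i : Fin n) :
    lieVF v1 (lieVF v2 v3) x i = lieVF (lieVF v1 v2) v3 x i + lieVF v2 (lieVF v1 v3) x i := by
  have hL : lieVF v1 (lieVF v2 v3) x i = ∑ k, ∑ l,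
      (v1 x k * (pd k (fun y => v2 y l) x * pd l (fun y => v3 y i) x
          + v2 x l * pd k (pd l (fun y => v3 y i)) x
          - (pd k (fun y => v3 y l) x * pd l (fun y => v2 y i) x
          + v3 x l * pd k (pd l (fun y => v2 y i)) x))
        - (v2 x l * pd l (fun y => v3 y k) x - v3 x l * pd l (fun y => v2 y k) x)
          * pd k (fun y => v1 y i) x) := by
    show (∑ k, (v1 x k * pd k (fun y => lieVF v2 v3 y i) x
        - lieVF v2 v3 x k * pd k (fun y => v1 y i) x)) = _
    simp only [pd_lieVF hv2 hv3]
    simp only [lieVF_app]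
    simp only [Finset.mul_sum, Finset.sum_mul, ← Finset.sum_sub_distrib]
    try exact Finset.sum_congr rfl fun k _ => Finset.sum_congr rfl fun l _ => by ring
  have hR : lieVF (lieVF v1 v2) v3 x i + lieVF v2 (lieVF v1 v3) x i = ∑ k, ∑ l,
      (((v1 x l * pd l (fun y => v2 y k) x - v2 x l * pd l (fun y => v1 y k) x)
          * pd k (fun y => v3 y i) x
        - v3 x k * (pd k (fun y => v1 y l) x * pd l (fun y => v2 y i) x
          + v1 x l * pd k (pd l (fun y => v2 y i)) x
          - (pd k (fun y => v2 y l) x * pd l (fun y => v1 y i) x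
          + v2 x l * pd k (pd l (fun y => v1 y i)) x)))
      + (v2 x k * (pd k (fun y => v1 y l) x * pd l (fun y => v3 y i) x
          + v1 x l * pd k (pd l (fun y => v3 y i)) x
          - (pd k (fun y => v3 y l) x * pd l (fun y => v1 y i) x
          + v3 x l * pd k (pd l (fun y => v1 y i)) x))
        - (v1 x l * pd l (fun y => v3 y k) x - v3 x l * pd l (fun y => v1 y k) x)
          * pd k (fun y => v2 y i) x)) := by
    show (∑ k, (lieVF v1 v2 x k * pd k (fun y => v3 y i) x
        - v3 x k * pd k (fun y => lieVF v1 v2 y i) x))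
      + (∑ k, (v2 x k * pd k (fun y => lieVF v1 v3 y i) x
        - lieVF v1 v3 x k * pd k (fun y => v2 y i) x)) = _
    simp only [pd_lieVF hv1 hv2, pd_lieVF hv1 hv3]
    simp only [lieVF_app]
    simp only [Finset.mul_sum, Finset.sum_mul, ← Finset.sum_sub_distrib,
      ← Finset.sum_add_distrib]
    try exact Finset.sum_congr rfl fun k _ => Finset.sum_congr rfl fun l _ => by ring
  rw [hL, hR]
  refine cancel2 _ _ fun k l => ?_
  simp only [pd_comm (hv1 i) l k, pd_comm (hv2 i) l k, pd_comm (hv3 i) l k]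
  ring

end CD

namespace CD
variable {n : ℕ} {x : Fin n → ℝ}
variable {v1 v2 v3 γ β α : (Fin n → ℝ) → Fin n → ℝ}

lemma lieDer1_app (X B : (Fin n → ℝ) → Fin n → ℝ) (x : Fin n → ℝ) (k : Fin n) :
    lieDer1 X B x k
      = ∑ l, (X x l * pd l (fun y => B y k) x + B x l * pd k (fun y => X y l) x) := by
  show (∑ l, X x l * pd l (fun y => B y k) x) + (∑ l, B x l * pd k (fun y => X y l) x) = _
  rw [← Finset.sum_add_distrib]

lemma iotadEta_app (v' η : (Fin n → ℝ) → Fin n → ℝ) (x : Fin n → ℝ) (k : Fin n) :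
    iotadEta v' η x k
      = ∑ l, v' x l * (pd l (fun y => η y k) x - pd k (fun y => η y l) x) := rfl

lemma idA (hv1 : ∀ j, ContDiff ℝ (⊤ : ℕ∞) (fun x => v1 x j))
    (hv2 : ∀ j, ContDiff ℝ (⊤ : ℕ∞) (fun x => v2 x j))
    (hγ : ∀ j, ContDiff ℝ (⊤ : ℕ∞) (fun x => γ x j)) (x : Fin n → ℝ) (i : Fin n) :
    lieDer1 v1 (lieDer1 v2 γ) x i
      = lieDer1 (lieVF v1 v2) γ x i + lieDer1 v2 (lieDer1 v1 γ) x i := by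
  have hL : lieDer1 v1 (lieDer1 v2 γ) x i = ∑ k, ∑ l,
      (v1 x k * (pd k (fun y => v2 y l) x * pd l (fun y => γ y i) x
          + v2 x l * pd k (pd l (fun y => γ y i)) x
          + pd k (fun y => γ y l) x * pd i (fun y => v2 y l) x
          + γ x l * pd k (pd i (fun y => v2 y l)) x)
        + (v2 x l * pd l (fun y => γ y k) x + γ x l * pd k (fun y => v2 y l) x)
          * pd i (fun y => v1 y k) x) := by
    show (∑ k, v1 x k * pd k (fun y => lieDer1 v2 γ y i) x)
        + (∑ k, lieDer1 v2 γ x k * pd i (fun y => v1 y k) x) = _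
    simp only [pd_lieDer1 hv2 hγ]
    simp only [lieDer1_app]
    simp only [Finset.mul_sum, Finset.sum_mul, ← Finset.sum_add_distrib]
    try exact Finset.sum_congr rfl fun k _ => Finset.sum_congr rfl fun l _ => by ring
  have hR : lieDer1 (lieVF v1 v2) γ x i + lieDer1 v2 (lieDer1 v1 γ) x i = ∑ k, ∑ l,
      (((v1 x l * pd l (fun y => v2 y k) x - v2 x l * pd l (fun y => v1 y k) x)
          * pd k (fun y => γ y i) x
        + γ x k * (pd i (fun y => v1 y l) x * pd l (fun y => v2 y k) x
          + v1 x l * pd i (pd l (fun y => v2 y k)) x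
          - (pd i (fun y => v2 y l) x * pd l (fun y => v1 y k) x
          + v2 x l * pd i (pd l (fun y => v1 y k)) x)))
      + (v2 x k * (pd k (fun y => v1 y l) x * pd l (fun y => γ y i) x
          + v1 x l * pd k (pd l (fun y => γ y i)) x
          + pd k (fun y => γ y l) x * pd i (fun y => v1 y l) x
          + γ x l * pd k (pd i (fun y => v1 y l)) x)
        + (v1 x l * pd l (fun y => γ y k) x + γ x l * pd k (fun y => v1 y l) x)
          * pd i (fun y => v2 y k) x)) := by
    show ((∑ k, lieVF v1 v2 x k * pd k (fun y => γ y i) x)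
        + (∑ k, γ x k * pd i (fun y => lieVF v1 v2 y k) x))
      + ((∑ k, v2 x k * pd k (fun y => lieDer1 v1 γ y i) x)
        + (∑ k, lieDer1 v1 γ x k * pd i (fun y => v2 y k) x)) = _
    simp only [pd_lieVF hv1 hv2, pd_lieDer1 hv1 hγ]
    simp only [lieVF_app, lieDer1_app]
    simp only [Finset.mul_sum, Finset.sum_mul, ← Finset.sum_sub_distrib,
      ← Finset.sum_add_distrib]
    try exact Finset.sum_congr rfl fun k _ => Finset.sum_congr rfl fun l _ => by ring
  rw [hL, hR]
  refine cancel2 _ _ fun k l => ?_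
  simp only [pd_comm (hγ i) l k, pd_comm (hv1 l) i k, pd_comm (hv1 k) i l,
    pd_comm (hv2 l) i k, pd_comm (hv2 k) i l, pd_comm (hv1 l) i l, pd_comm (hv1 k) i k,
    pd_comm (hv2 l) i l, pd_comm (hv2 k) i k]
  ring

lemma idB (hv1 : ∀ j, ContDiff ℝ (⊤ : ℕ∞) (fun x => v1 x j))
    (hv3 : ∀ j, ContDiff ℝ (⊤ : ℕ∞) (fun x => v3 x j))
    (hβ : ∀ j, ContDiff ℝ (⊤ : ℕ∞) (fun x => β x j)) (x : Fin n → ℝ) (i : Fin n) :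
    lieDer1 v1 (iotadEta v3 β) x i
      = iotadEta v3 (lieDer1 v1 β) x i + iotadEta (lieVF v1 v3) β x i := by
  have hL : lieDer1 v1 (iotadEta v3 β) x i = ∑ k, ∑ l,
      (v1 x k * (pd k (fun y => v3 y l) x
            * (pd l (fun y => β y i) x - pd i (fun y => β y l) x)
          + v3 x l * (pd k (pd l (fun y => β y i)) x - pd k (pd i (fun y => β y l)) x))
        + v3 x l * (pd l (fun y => β y k) x - pd k (fun y => β y l) x)
          * pd i (fun y => v1 y k) x) := by
    show (∑ k, v1 x k * pd k (fun y => iotadEta v3 β y i) x)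
        + (∑ k, iotadEta v3 β x k * pd i (fun y => v1 y k) x) = _
    simp only [pd_iotadEta hv3 hβ]
    simp only [iotadEta_app]
    simp only [Finset.mul_sum, Finset.sum_mul, ← Finset.sum_add_distrib]
    try exact Finset.sum_congr rfl fun k _ => Finset.sum_congr rfl fun l _ => by ring
  have hR : iotadEta v3 (lieDer1 v1 β) x i + iotadEta (lieVF v1 v3) β x i = ∑ k, ∑ l,
      (v3 x k * ((pd k (fun y => v1 y l) x * pd l (fun y => β y i) x
            + v1 x l * pd k (pd l (fun y => β y i)) x
            + pd k (fun y => β y l) x * pd i (fun y => v1 y l) x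
            + β x l * pd k (pd i (fun y => v1 y l)) x)
          - (pd i (fun y => v1 y l) x * pd l (fun y => β y k) x
            + v1 x l * pd i (pd l (fun y => β y k)) x
            + pd i (fun y => β y l) x * pd k (fun y => v1 y l) x
            + β x l * pd i (pd k (fun y => v1 y l)) x))
        + (v1 x l * pd l (fun y => v3 y k) x - v3 x l * pd l (fun y => v1 y k) x)
          * (pd k (fun y => β y i) x - pd i (fun y => β y k) x)) := by
    show (∑ k, v3 x k * (pd k (fun y => lieDer1 v1 β y i) x
          - pd i (fun y => lieDer1 v1 β y k) x))
      + (∑ k, lieVF v1 v3 x k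
          * (pd k (fun y => β y i) x - pd i (fun y => β y k) x)) = _
    simp only [pd_lieDer1 hv1 hβ]
    simp only [lieVF_app]
    simp only [Finset.mul_sum, Finset.sum_mul, ← Finset.sum_sub_distrib,
      ← Finset.sum_add_distrib]
    try exact Finset.sum_congr rfl fun k _ => Finset.sum_congr rfl fun l _ => by ring
  rw [hL, hR]
  refine cancel2 _ _ fun k l => ?_
  simp only [pd_comm (hβ i) l k, pd_comm (hβ l) i k, pd_comm (hβ k) i l,
    pd_comm (hβ l) i l, pd_comm (hβ k) i k,
    pd_comm (hv1 l) i k, pd_comm (hv1 k) i l, pd_comm (hv1 l) i l, pd_comm (hv1 k) i k]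
  ring

lemma idC (hv2 : ∀ j, ContDiff ℝ (⊤ : ℕ∞) (fun x => v2 x j))
    (hv3 : ∀ j, ContDiff ℝ (⊤ : ℕ∞) (fun x => v3 x j))
    (hα : ∀ j, ContDiff ℝ (⊤ : ℕ∞) (fun x => α x j)) (x : Fin n → ℝ) (i : Fin n) :
    -(iotadEta (lieVF v2 v3) α x i)
      = iotadEta v3 (iotadEta v2 α) x i - lieDer1 v2 (iotadEta v3 α) x i := by
  have hL : -(iotadEta (lieVF v2 v3) α x i) = ∑ k, ∑ l,
      (-((v2 x l * pd l (fun y => v3 y k) x - v3 x l * pd l (fun y => v2 y k) x)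
          * (pd k (fun y => α y i) x - pd i (fun y => α y k) x))) := by
    show -(∑ k, lieVF v2 v3 x k
        * (pd k (fun y => α y i) x - pd i (fun y => α y k) x)) = _
    simp only [lieVF_app]
    simp only [Finset.mul_sum, Finset.sum_mul, ← Finset.sum_neg_distrib]
    try exact Finset.sum_congr rfl fun k _ => Finset.sum_congr rfl fun l _ => by ring
  have hR : iotadEta v3 (iotadEta v2 α) x i - lieDer1 v2 (iotadEta v3 α) x i = ∑ k, ∑ l,
      (v3 x k * ((pd k (fun y => v2 y l) x
            * (pd l (fun y => α y i) x - pd i (fun y => α y l) x)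
          + v2 x l * (pd k (pd l (fun y => α y i)) x - pd k (pd i (fun y => α y l)) x))
        - (pd i (fun y => v2 y l) x
            * (pd l (fun y => α y k) x - pd k (fun y => α y l) x)
          + v2 x l * (pd i (pd l (fun y => α y k)) x - pd i (pd k (fun y => α y l)) x)))
      - (v2 x k * (pd k (fun y => v3 y l) x
            * (pd l (fun y => α y i) x - pd i (fun y => α y l) x)
          + v3 x l * (pd k (pd l (fun y => α y i)) x - pd k (pd i (fun y => α y l)) x))
        + v3 x l * (pd l (fun y => α y k) x - pd k (fun y => α y l) x)
          * pd i (fun y => v2 y k) x)) := by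
    show (∑ k, v3 x k * (pd k (fun y => iotadEta v2 α y i) x
          - pd i (fun y => iotadEta v2 α y k) x))
      - ((∑ k, v2 x k * pd k (fun y => iotadEta v3 α y i) x)
        + (∑ k, iotadEta v3 α x k * pd i (fun y => v2 y k) x)) = _
    simp only [pd_iotadEta hv2 hα, pd_iotadEta hv3 hα]
    simp only [iotadEta_app]
    simp only [Finset.mul_sum, Finset.sum_mul, ← Finset.sum_sub_distrib,
      ← Finset.sum_add_distrib]
    try exact Finset.sum_congr rfl fun k _ => Finset.sum_congr rfl fun l _ => by ring
  rw [hL, hR]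
  refine cancel2 _ _ fun k l => ?_
  simp only [pd_comm (hα i) l k, pd_comm (hα l) i k, pd_comm (hα k) i l,
    pd_comm (hα l) i l, pd_comm (hα k) i k]
  ring

end CD

namespace CD
variable {n : ℕ} {x : Fin n → ℝ}
variable {v1 v2 v3 : (Fin n → ℝ) → Fin n → ℝ}
variable {H : Fin n → Fin n → Fin n → (Fin n → ℝ) → ℝ}

lemma pd_neg {f : (Fin n → ℝ) → ℝ} (k : Fin n) :
    pd k (fun y => -f y) x = -pd k f x := by
  simp [pd, fderiv_neg]

lemma iota2H_app (H : Fin n → Fin n → Fin n → (Fin n → ℝ) → ℝ)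
    (v v' : (Fin n → ℝ) → Fin n → ℝ) (x : Fin n → ℝ) (k : Fin n) :
    iota2H H v v' x k = ∑ p, ∑ q, v' x p * v x q * H p q k x := rfl

lemma idD (hH : ∀ a b c, ContDiff ℝ (⊤ : ℕ∞) (H a b c)) (hHa : Antisym3 H) (hHc : Closed3 H)
    (hv1 : ∀ j, ContDiff ℝ (⊤ : ℕ∞) (fun x => v1 x j))
    (hv2 : ∀ j, ContDiff ℝ (⊤ : ℕ∞) (fun x => v2 x j))
    (hv3 : ∀ j, ContDiff ℝ (⊤ : ℕ∞) (fun x => v3 x j)) (x : Fin n → ℝ) (i : Fin n) :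
    lieDer1 v1 (iota2H H v2 v3) x i + iota2H H v1 (lieVF v2 v3) x i
      = -(iotadEta v3 (iota2H H v1 v2) x i) + iota2H H (lieVF v1 v2) v3 x i
        + lieDer1 v2 (iota2H H v1 v3) x i + iota2H H v2 (lieVF v1 v3) x i := by
  have cyc_fun : ∀ a b c : Fin n, H a b c = H b c a := by
    intro a b c
    funext y
    rw [hHa.1 a b c y, hHa.2 b a c y]; ring
  have hdHi : ∀ a b c : Fin n, pd i (H a b c) x
      = pd a (H b c i) x - pd b (H a c i) x + pd c (H a b i) x := by
    intro a b c
    have h := hHc i a b c x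
    rw [cyc_fun i b c, cyc_fun i a c, cyc_fun i a b] at h
    linarith
  have hL : lieDer1 v1 (iota2H H v2 v3) x i + iota2H H v1 (lieVF v2 v3) x i
      = ∑ k, ∑ p, ∑ q,
      (v1 x k * (pd k (fun y => v3 y p) x * v2 x q * H p q i x
          + v3 x p * pd k (fun y => v2 y q) x * H p q i x
          + v3 x p * v2 x q * pd k (H p q i) x)
        + v3 x p * v2 x q * H p q k x * pd i (fun y => v1 y k) x
        + (v2 x q * pd q (fun y => v3 y k) x - v3 x q * pd q (fun y => v2 y k) x)
          * v1 x p * H k p i x) := by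
    show ((∑ k, v1 x k * pd k (fun y => iota2H H v2 v3 y i) x)
        + (∑ k, iota2H H v2 v3 x k * pd i (fun y => v1 y k) x))
      + (∑ k, ∑ p, lieVF v2 v3 x k * v1 x p * H k p i x) = _
    simp only [pd_iota2H hH hv2 hv3]
    simp only [iota2H_app, lieVF_app]
    simp only [Finset.mul_sum, Finset.sum_mul, ← Finset.sum_add_distrib]
    try exact Finset.sum_congr rfl fun k _ => Finset.sum_congr rfl fun p _ =>
      Finset.sum_congr rfl fun q _ => by ring
  have hR : -(iotadEta v3 (iota2H H v1 v2) x i) + iota2H H (lieVF v1 v2) v3 x i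
        + lieDer1 v2 (iota2H H v1 v3) x i + iota2H H v2 (lieVF v1 v3) x i
      = ∑ k, ∑ p, ∑ q,
      (-(v3 x k * ((pd k (fun y => v2 y p) x * v1 x q * H p q i x
            + v2 x p * pd k (fun y => v1 y q) x * H p q i x
            + v2 x p * v1 x q * pd k (H p q i) x)
          - (pd i (fun y => v2 y p) x * v1 x q * H p q k x
            + v2 x p * pd i (fun y => v1 y q) x * H p q k x
            + v2 x p * v1 x q
              * (pd p (H q k i) x - pd q (H p k i) x + pd k (H p q i) x))))
        + v3 x k * (v1 x q * pd q (fun y => v2 y p) x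
            - v2 x q * pd q (fun y => v1 y p) x) * H k p i x
        + (v2 x k * (pd k (fun y => v3 y p) x * v1 x q * H p q i x
            + v3 x p * pd k (fun y => v1 y q) x * H p q i x
            + v3 x p * v1 x q * pd k (H p q i) x)
          + v3 x p * v1 x q * H p q k x * pd i (fun y => v2 y k) x)
        + (v1 x q * pd q (fun y => v3 y k) x - v3 x q * pd q (fun y => v1 y k) x)
          * v2 x p * H k p i x) := by
    show (-(∑ k, v3 x k * (pd k (fun y => iota2H H v1 v2 y i) x
          - pd i (fun y => iota2H H v1 v2 y k) x))
        + (∑ k, ∑ p, v3 x k * lieVF v1 v2 x p * H k p i x))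
      + ((∑ k, v2 x k * pd k (fun y => iota2H H v1 v3 y i) x)
        + (∑ k, iota2H H v1 v3 x k * pd i (fun y => v2 y k) x))
      + (∑ k, ∑ p, lieVF v1 v3 x k * v2 x p * H k p i x) = _
    simp only [pd_iota2H hH hv1 hv2, pd_iota2H hH hv1 hv3]
    simp only [hdHi]
    simp only [iota2H_app, lieVF_app]
    simp only [Finset.mul_sum, Finset.sum_mul, ← Finset.sum_sub_distrib,
      ← Finset.sum_add_distrib, ← Finset.sum_neg_distrib]
    try exact Finset.sum_congr rfl fun k _ => Finset.sum_congr rfl fun p _ =>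
      Finset.sum_congr rfl fun q _ => by ring
  rw [hL, hR]
  refine cancel3 _ _ fun k p q => ?_
  have swv : ∀ (a b : Fin n), (∀ d : Fin n, pd d (H b a i) x = -pd d (H a b i) x) := by
    intro a b d
    rw [show H b a i = fun y => -H a b i y from funext fun y => hHa.1 b a i y, pd_neg]
  have cyc_pt : ∀ a b c : Fin n, H a b c x = H b c a x := fun a b c => by
    rw [cyc_fun a b c]
  have e1 : H p q k x = H k p q x := (cyc_pt p q k).trans (cyc_pt q k p)
  have e2 : H q k p x = H k p q x := cyc_pt q k p
  have e3 : H q p k x = -H k p q x := by rw [hHa.1 q p k x, e1]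
  have e4 : H k q p x = -H k p q x := by rw [hHa.1 k q p x, e2]
  have e5 : H p k q x = -H k p q x := hHa.1 p k q x
  have f1 : H p k i x = -H k p i x := hHa.1 p k i x
  have f2 : H q k i x = -H k q i x := hHa.1 q k i x
  have f3 : H q p i x = -H p q i x := hHa.1 q p i x
  simp only [e1, e2, e3, e4, e5, f1, f2, f3, swv k p, swv k q, swv p q]
  ring

end CD

namespace CD
variable {n : ℕ} {x : Fin n → ℝ}
variable {X v' a b c : (Fin n → ℝ) → Fin n → ℝ}

lemma pd_combo (ha : ∀ j, ContDiff ℝ (⊤ : ℕ∞) (fun x => a x j))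
    (hb : ∀ j, ContDiff ℝ (⊤ : ℕ∞) (fun x => b x j))
    (hc : ∀ j, ContDiff ℝ (⊤ : ℕ∞) (fun x => c x j)) (d j : Fin n) :
    pd d (fun y => a y j - b y j + c y j) x
      = pd d (fun y => a y j) x - pd d (fun y => b y j) x + pd d (fun y => c y j) x := by
  rw [pd_add ((dAt (ha j)).fun_sub (dAt (hb j))) (dAt (hc j)) d,
    pd_sub (dAt (ha j)) (dAt (hb j)) d]

lemma lieDer1_split (ha : ∀ j, ContDiff ℝ (⊤ : ℕ∞) (fun x => a x j))
    (hb : ∀ j, ContDiff ℝ (⊤ : ℕ∞) (fun x => b x j))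
    (hc : ∀ j, ContDiff ℝ (⊤ : ℕ∞) (fun x => c x j)) (x : Fin n → ℝ) (i : Fin n) :
    lieDer1 X (fun y j => a y j - b y j + c y j) x i
      = lieDer1 X a x i - lieDer1 X b x i + lieDer1 X c x i := by
  simp only [lieDer1]
  simp only [pd_combo ha hb hc]
  simp only [mul_add, mul_sub, add_mul, sub_mul, Finset.sum_add_distrib,
    Finset.sum_sub_distrib]
  ring

lemma iotadEta_split (ha : ∀ j, ContDiff ℝ (⊤ : ℕ∞) (fun x => a x j))
    (hb : ∀ j, ContDiff ℝ (⊤ : ℕ∞) (fun x => b x j))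
    (hc : ∀ j, ContDiff ℝ (⊤ : ℕ∞) (fun x => c x j)) (x : Fin n → ℝ) (i : Fin n) :
    iotadEta v' (fun y j => a y j - b y j + c y j) x i
      = iotadEta v' a x i - iotadEta v' b x i + iotadEta v' c x i := by
  simp only [iotadEta]
  simp only [pd_combo ha hb hc]
  simp only [mul_add, mul_sub, add_mul, sub_mul, Finset.sum_add_distrib,
    Finset.sum_sub_distrib]
  ring

end CD


open CD

/-- for a closed 3-form `H`, the `H`-twisted Courant–Dorfman bracket satisfies
the Leibniz identity `[e₁, [e₂, e₃]] = [[e₁, e₂], e₃] + [e₂, [e₁, e₃]]`. -/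
theorem dorfman_leibniz {n : ℕ}
    (H : Fin n → Fin n → Fin n → (Fin n → ℝ) → ℝ)
    (hHs : ∀ i j k, ContDiff ℝ (⊤ : ℕ∞) (H i j k)) (hHa : Antisym3 H) (hHc : Closed3 H)
    (e₁ e₂ e₃ : ((Fin n → ℝ) → Fin n → ℝ) × ((Fin n → ℝ) → Fin n → ℝ))
    (h₁ : SmoothSec e₁) (h₂ : SmoothSec e₂) (h₃ : SmoothSec e₃) :
    (∀ x i, (dorfman H e₁ (dorfman H e₂ e₃)).1 x i
        = (dorfman H (dorfman H e₁ e₂) e₃).1 x i + (dorfman H e₂ (dorfman H e₁ e₃)).1 x i) ∧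
    (∀ x i, (dorfman H e₁ (dorfman H e₂ e₃)).2 x i
        = (dorfman H (dorfman H e₁ e₂) e₃).2 x i + (dorfman H e₂ (dorfman H e₁ e₃)).2 x i) := by
  obtain ⟨v1, η1⟩ := e₁
  obtain ⟨v2, η2⟩ := e₂
  obtain ⟨v3, η3⟩ := e₃
  obtain ⟨hv1, hη1⟩ := h₁
  obtain ⟨hv2, hη2⟩ := h₂
  obtain ⟨hv3, hη3⟩ := h₃
  constructor
  · intro x i
    exact idJacobi hv1 hv2 hv3 x i
  · intro x i
    show lieDer1 v1
        (fun y j => lieDer1 v2 η3 y j - iotadEta v3 η2 y j + iota2H H v2 v3 y j) x i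
        - iotadEta (lieVF v2 v3) η1 x i + iota2H H v1 (lieVF v2 v3) x i
      = (lieDer1 (lieVF v1 v2) η3 x i
          - iotadEta v3
            (fun y j => lieDer1 v1 η2 y j - iotadEta v2 η1 y j + iota2H H v1 v2 y j) x i
          + iota2H H (lieVF v1 v2) v3 x i)
        + (lieDer1 v2
            (fun y j => lieDer1 v1 η3 y j - iotadEta v3 η1 y j + iota2H H v1 v3 y j) x i
          - iotadEta (lieVF v1 v3) η2 x i + iota2H H v2 (lieVF v1 v3) x i)
    rw [lieDer1_split (X := v1) (smooth_lieDer1 hv2 hη3) (smooth_iotadEta hv3 hη2)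
        (smooth_iota2H hHs hv2 hv3) x i,
      iotadEta_split (v' := v3) (smooth_lieDer1 hv1 hη2) (smooth_iotadEta hv2 hη1)
        (smooth_iota2H hHs hv1 hv2) x i,
      lieDer1_split (X := v2) (smooth_lieDer1 hv1 hη3) (smooth_iotadEta hv3 hη1)
        (smooth_iota2H hHs hv1 hv3) x i]
    have hA := idA hv1 hv2 hη3 x i
    have hB := idB hv1 hv3 hη2 x i
    have hC := idC hv2 hv3 hη1 x i
    have hD := idD hHs hHa hHc hv1 hv2 hv3 x i
    linarith
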